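/- arXiv:1812.02004 — 4 statements merged into one kernel-verified Lean document; each statement's English description precedes it below -/
import Mathlib

section
/- Convexity/concavity of the Rényi entropy of differential-escort densities in the deformation parameter: let ρ be a probability density and fix q ≠ 1. On the (convex) set of parameters α for which W_{1+α(q−1)}[ρ] is finite and positive, the function α ↦ R_q[ρ_α] = (1/(1−q)) log W_{1+α(q−1)}[ρ] is convex if q < 1 and concave if q > 1. Equivalently, the map s ↦ log W_s[ρ] is a convex function of s on the set where W_s[ρ] is finite. Moreover, if ρ is a uniform density then α ↦ R_q[ρ_α] is affine. -/
/-!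
On `Λ` the density is positive, so `ρ ^ s = exp (s · log ρ)` and the entropic moment `W_s[ρ]`
is the moment generating function of `log ρ` under Lebesgue measure on `Λ`. Its logarithm is a
cumulant generating function, which is convex by Hölder's inequality with exponents `1/a`, `1/b`.
The exponent `1 + α (q - 1)` is affine in `α`, so `R_q[ρ_α]` is `1/(1-q)` times a convex
function of `α`. For `ρ = c` on `Λ`, `log W_s[ρ] = log |Λ| + s log c` is affine in `s`.
-/

open MeasureTheory Set

/-- The change of variable `y_α(x) = ∫₀ˣ σ(t)^{1-α} dt` of the differential-escort
transformation. -/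
noncomputable def yOf (σ : ℝ → ℝ) (α x : ℝ) : ℝ := ∫ t in (0:ℝ)..x, σ t ^ (1 - α)

/-- The differential-escort density `𝔈_α[σ](u) = σ(x_α(u))^α` on `Λ_α = y_α '' Λ`,
extended by `0` outside, where `x_α` is the inverse of `y_α` on `Λ`. -/
noncomputable def escortOf (σ : ℝ → ℝ) (Λ : Set ℝ) (α : ℝ) : ℝ → ℝ :=
  (yOf σ α '' Λ).indicator fun u => σ (Function.invFunOn (yOf σ α) Λ u) ^ α

/-- A probability density `ρ` on `ℝ`, continuous and strictly positive on an open
interval `Λ = (A, B)` whose closure contains `0`, and zero outside `Λ`. -/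
structure DensitySetup where
  ρ : ℝ → ℝ
  A : ℝ
  B : ℝ
  hAB : A < B
  meas : Measurable ρ
  nonneg : ∀ x, 0 ≤ ρ x
  total : (∫ x, ρ x) = 1
  cont : ContinuousOn ρ (Set.Ioo A B)
  pos : ∀ x ∈ Set.Ioo A B, 0 < ρ x
  zero : ∀ x, x ∉ Set.Ioo A B → ρ x = 0
  mem0 : (0:ℝ) ∈ closure (Set.Ioo A B)

open ProbabilityTheory

section Holder

variable {Ω : Type*} {m : MeasurableSpace Ω} {μ : Measure Ω} {F G : Ω → ℝ}

lemma memLp_rpow_of_integrable (hF₀ : 0 ≤ᵐ[μ] F) (hF : Integrable F μ) {a : ℝ} (ha : 0 < a) :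
    MemLp (fun x => F x ^ a) (ENNReal.ofReal (1 / a)) μ := by
  have h := (memLp_one_iff_integrable.2 hF).norm_rpow_div (ENNReal.ofReal a)
  rw [ENNReal.toReal_ofReal ha.le, one_div, ← ENNReal.ofReal_inv_of_pos ha] at h
  refine (one_div a ▸ h).ae_eq ?_
  filter_upwards [hF₀] with x hx
  rw [Real.norm_of_nonneg hx]

lemma integral_rpow_mul_rpow_le (hF₀ : 0 ≤ᵐ[μ] F) (hG₀ : 0 ≤ᵐ[μ] G) (hF : Integrable F μ)
    (hG : Integrable G μ) {a b : ℝ} (ha : 0 ≤ a) (hb : 0 ≤ b) (hab : a + b = 1) :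
    ∫ x, F x ^ a * G x ^ b ∂μ ≤ (∫ x, F x ∂μ) ^ a * (∫ x, G x ∂μ) ^ b := by
  rcases ha.eq_or_lt with rfl | ha
  · obtain rfl : b = 1 := by linarith
    simp
  rcases hb.eq_or_lt with rfl | hb
  · obtain rfl : a = 1 := by linarith
    simp
  have hrpow_inv : ∀ {H : Ω → ℝ} {c : ℝ}, 0 ≤ᵐ[μ] H → 0 < c →
      ∫ x, (H x ^ c) ^ (1 / c) ∂μ = ∫ x, H x ∂μ := fun hH₀ hc =>
    integral_congr_ae <| by
      filter_upwards [hH₀] with x hx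
      rw [← Real.rpow_mul hx, mul_one_div_cancel hc.ne', Real.rpow_one]
  have holder := integral_mul_le_Lp_mul_Lq_of_nonneg (Real.holderConjugate_one_div ha hb hab)
    (hF₀.mono fun x hx => Real.rpow_nonneg hx a) (hG₀.mono fun x hx => Real.rpow_nonneg hx b)
    (memLp_rpow_of_integrable hF₀ hF ha) (memLp_rpow_of_integrable hG₀ hG hb)
  rwa [hrpow_inv hF₀ ha, hrpow_inv hG₀ hb, one_div_one_div, one_div_one_div] at holder

end Holder

section LogConvexity

variable {Ω : Type*} {m : MeasurableSpace Ω} {μ : Measure Ω} {X : Ω → ℝ}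

theorem convexOn_cgf : ConvexOn ℝ (integrableExpSet X μ) (cgf X μ) := by
  refine ⟨convex_integrableExpSet, fun s hs t ht a b ha hb hab => ?_⟩
  rcases eq_or_ne μ 0 with rfl | hμ
  · simp [cgf]
  have hmgf : mgf X μ (a • s + b • t) ≤ mgf X μ s ^ a * mgf X μ t ^ b := by
    have hexp : ∀ x, Real.exp ((a • s + b • t) * X x)
        = Real.exp (s * X x) ^ a * Real.exp (t * X x) ^ b := fun x => by
      rw [← Real.exp_mul, ← Real.exp_mul, ← Real.exp_add, smul_eq_mul, smul_eq_mul]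
      ring_nf
    simp only [mgf, hexp]
    exact integral_rpow_mul_rpow_le (ae_of_all _ fun x => (Real.exp_pos _).le)
      (ae_of_all _ fun x => (Real.exp_pos _).le) hs ht ha hb hab
  have hpos : ∀ {u}, u ∈ integrableExpSet X μ → 0 < mgf X μ u := fun hu => mgf_pos' hμ hu
  calc cgf X μ (a • s + b • t)
      ≤ Real.log (mgf X μ s ^ a * mgf X μ t ^ b) :=
        Real.log_le_log (hpos (convex_integrableExpSet hs ht ha hb hab)) hmgf
    _ = a • cgf X μ s + b • cgf X μ t := by
        rw [Real.log_mul (Real.rpow_pos_of_pos (hpos hs) a).ne'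
          (Real.rpow_pos_of_pos (hpos ht) b).ne', Real.log_rpow (hpos hs),
          Real.log_rpow (hpos ht)]
        rfl

end LogConvexity

section RpowMoments

variable {Ω : Type*} {m : MeasurableSpace Ω} {μ : Measure Ω} {f : Ω → ℝ}

lemma rpow_ae_eq_exp_mul_log (hf : ∀ᵐ x ∂μ, 0 < f x) (s : ℝ) :
    (fun x => f x ^ s) =ᵐ[μ] fun x => Real.exp (s * Real.log (f x)) := by
  filter_upwards [hf] with x hx
  rw [Real.rpow_def_of_pos hx, mul_comm]

lemma setOf_integrable_rpow_eq_integrableExpSet (hf : ∀ᵐ x ∂μ, 0 < f x) :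
    {s | Integrable (fun x => f x ^ s) μ} = integrableExpSet (fun x => Real.log (f x)) μ :=
  ext fun s => integrable_congr (rpow_ae_eq_exp_mul_log hf s)

lemma integral_rpow_eq_mgf (hf : ∀ᵐ x ∂μ, 0 < f x) (s : ℝ) :
    ∫ x, f x ^ s ∂μ = mgf (fun x => Real.log (f x)) μ s :=
  integral_congr_ae (rpow_ae_eq_exp_mul_log hf s)

lemma integral_rpow_pos (hμ : μ ≠ 0) (hf : ∀ᵐ x ∂μ, 0 < f x) {s : ℝ}
    (hs : Integrable (fun x => f x ^ s) μ) : 0 < ∫ x, f x ^ s ∂μ := by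
  rw [integral_rpow_eq_mgf hf]
  exact mgf_pos' hμ ((integrable_congr (rpow_ae_eq_exp_mul_log hf s)).1 hs)

theorem convexOn_log_integral_rpow (hf : ∀ᵐ x ∂μ, 0 < f x) :
    ConvexOn ℝ {s : ℝ | Integrable (fun x => f x ^ s) μ}
      (fun s => Real.log (∫ x, f x ^ s ∂μ)) := by
  have hcgf : (fun s => Real.log (∫ x, f x ^ s ∂μ)) = cgf (fun x => Real.log (f x)) μ :=
    funext fun s => congrArg Real.log (integral_rpow_eq_mgf hf s)
  rw [setOf_integrable_rpow_eq_integrableExpSet hf, hcgf]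
  exact convexOn_cgf

theorem convexOn_log_integral_rpow_one_add_mul (hμ : μ ≠ 0) (hf : ∀ᵐ x ∂μ, 0 < f x)
    (κ : ℝ) :
    ConvexOn ℝ {α : ℝ | Integrable (fun x => f x ^ (1 + α * κ)) μ
        ∧ 0 < ∫ x, f x ^ (1 + α * κ) ∂μ}
      (fun α => Real.log (∫ x, f x ^ (1 + α * κ) ∂μ)) := by
  have hlineMap : ∀ α, AffineMap.lineMap (1 : ℝ) (1 + κ) α = 1 + α * κ := fun α => by
    rw [AffineMap.lineMap_apply_ring']
    ring
  have hset : {α : ℝ | Integrable (fun x => f x ^ (1 + α * κ)) μ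
      ∧ 0 < ∫ x, f x ^ (1 + α * κ) ∂μ}
      = AffineMap.lineMap (1 : ℝ) (1 + κ) ⁻¹' {s : ℝ | Integrable (fun x => f x ^ s) μ} := by
    ext α
    rw [mem_preimage, hlineMap]
    exact and_iff_left_of_imp (integral_rpow_pos hμ hf)
  rw [hset]
  refine ((convexOn_log_integral_rpow hf).comp_affineMap _).congr fun α _ => ?_
  rw [Function.comp_apply, hlineMap]

lemma log_integral_rpow_of_ae_eq_const [IsFiniteMeasure μ] (hμ : μ ≠ 0) {c : ℝ} (hc : 0 < c)
    (h : ∀ᵐ x ∂μ, f x = c) (s : ℝ) :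
    Real.log (∫ x, f x ^ s ∂μ) = Real.log (μ.real univ) + s * Real.log c := by
  have hμ_real : μ.real univ ≠ 0 := by
    simpa [measureReal_def, ENNReal.toReal_eq_zero_iff] using hμ
  rw [integral_congr_ae (h.mono fun x hx => by rw [hx]), integral_const, smul_eq_mul,
    Real.log_mul hμ_real (Real.rpow_pos_of_pos hc s).ne', Real.log_rpow hc]

end RpowMoments

namespace DensitySetup

variable (E : DensitySetup)

lemma ae_restrict_pos : ∀ᵐ x ∂(volume.restrict (Ioo E.A E.B)), 0 < E.ρ x :=
  ae_restrict_of_forall_mem measurableSet_Ioo E.pos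

lemma restrict_ne_zero : volume.restrict (Ioo E.A E.B) ≠ 0 := by
  simp [Measure.restrict_eq_zero, E.hAB]

end DensitySetup

theorem escort_renyi_convexity_general (E : DensitySetup) (q : ℝ) :
    ((q < 1 →
        ConvexOn ℝ
          {α : ℝ | IntegrableOn (fun x => E.ρ x ^ (1 + α * (q - 1))) (Set.Ioo E.A E.B)
            ∧ 0 < ∫ x in Set.Ioo E.A E.B, E.ρ x ^ (1 + α * (q - 1))}
          (fun α => (1 / (1 - q))
            * Real.log (∫ x in Set.Ioo E.A E.B, E.ρ x ^ (1 + α * (q - 1)))))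
      ∧ (1 < q →
          ConcaveOn ℝ
            {α : ℝ | IntegrableOn (fun x => E.ρ x ^ (1 + α * (q - 1))) (Set.Ioo E.A E.B)
              ∧ 0 < ∫ x in Set.Ioo E.A E.B, E.ρ x ^ (1 + α * (q - 1))}
            (fun α => (1 / (1 - q))
              * Real.log (∫ x in Set.Ioo E.A E.B, E.ρ x ^ (1 + α * (q - 1))))))
    ∧ ConvexOn ℝ
        {s : ℝ | IntegrableOn (fun x => E.ρ x ^ s) (Set.Ioo E.A E.B)}
        (fun s => Real.log (∫ x in Set.Ioo E.A E.B, E.ρ x ^ s))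
    ∧ ((∃ c : ℝ, 0 < c ∧ ∀ x ∈ Set.Ioo E.A E.B, E.ρ x = c) →
        ∃ m b : ℝ, ∀ α : ℝ,
          (1 / (1 - q)) * Real.log (∫ x in Set.Ioo E.A E.B, E.ρ x ^ (1 + α * (q - 1)))
            = m * α + b) := by
  have hlogW_param := convexOn_log_integral_rpow_one_add_mul E.restrict_ne_zero
    E.ae_restrict_pos (q - 1)
  refine ⟨⟨fun hq => hlogW_param.smul (one_div_nonneg.2 (sub_nonneg.2 hq.le)), fun hq => ?_⟩,
    convexOn_log_integral_rpow E.ae_restrict_pos, ?_⟩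
  · refine (hlogW_param.neg.smul (one_div_nonneg.2 (sub_nonneg.2 hq.le))).congr fun α _ => ?_
    simp only [Pi.neg_apply, smul_eq_mul]
    rw [← neg_sub q 1, one_div_neg_eq_neg_one_div]
    ring
  · rintro ⟨c, hc, hρc⟩
    have hlogW := log_integral_rpow_of_ae_eq_const E.restrict_ne_zero hc
      (ae_restrict_of_forall_mem measurableSet_Ioo hρc)
    refine ⟨(1 / (1 - q)) * ((q - 1) * Real.log c), (1 / (1 - q))
      * (Real.log ((volume.restrict (Ioo E.A E.B)).real univ) + Real.log c), fun α => ?_⟩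
    rw [hlogW]
    ring

/-- **Convexity/concavity of the Rényi entropy of differential-escort densities in the
deformation parameter**: fixing `q ≠ 1`, on the set of `α` for which
`W_{1+α(q-1)}[ρ]` is finite and positive, the map `α ↦ R_q[ρ_α] = (1/(1-q)) log W_{1+α(q-1)}[ρ]`
is convex if `q < 1` and concave if `q > 1`.  Equivalently, `s ↦ log W_s[ρ]` is convex on
the set where `W_s[ρ]` is finite.  Moreover, if `ρ` is uniform then `α ↦ R_q[ρ_α]` is affine. -/
theorem escort_renyi_convexity (E : DensitySetup) (q : ℝ) (hq : q ≠ 1) :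
    ((q < 1 →
        ConvexOn ℝ
          {α : ℝ | IntegrableOn (fun x => E.ρ x ^ (1 + α * (q - 1))) (Set.Ioo E.A E.B)
            ∧ 0 < ∫ x in Set.Ioo E.A E.B, E.ρ x ^ (1 + α * (q - 1))}
          (fun α => (1 / (1 - q))
            * Real.log (∫ x in Set.Ioo E.A E.B, E.ρ x ^ (1 + α * (q - 1)))))
      ∧ (1 < q →
          ConcaveOn ℝ
            {α : ℝ | IntegrableOn (fun x => E.ρ x ^ (1 + α * (q - 1))) (Set.Ioo E.A E.B)
              ∧ 0 < ∫ x in Set.Ioo E.A E.B, E.ρ x ^ (1 + α * (q - 1))}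
            (fun α => (1 / (1 - q))
              * Real.log (∫ x in Set.Ioo E.A E.B, E.ρ x ^ (1 + α * (q - 1))))))
    ∧ ConvexOn ℝ
        {s : ℝ | IntegrableOn (fun x => E.ρ x ^ s) (Set.Ioo E.A E.B)}
        (fun s => Real.log (∫ x in Set.Ioo E.A E.B, E.ρ x ^ s))
    ∧ ((∃ c : ℝ, 0 < c ∧ ∀ x ∈ Set.Ioo E.A E.B, E.ρ x = c) →
        ∃ m b : ℝ, ∀ α : ℝ,
          (1 / (1 - q)) * Real.log (∫ x in Set.Ioo E.A E.B, E.ρ x ^ (1 + α * (q - 1)))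
            = m * α + b) :=
  escort_renyi_convexity_general E q
end

section
/- The differential-escort transform of the exponential density is a q-exponential density: let ρ(x) = e^{−x} for x ∈ (0,∞) (and 0 otherwise), and let α > 0 with α ≠ 1. Then the change of variable is y_α(x) = (e^{(α−1)x} − 1)/(α−1), with inverse x_α(u) = log(1 + (α−1)u)/(α−1), the transformed support is Λ_α = (0,∞) if α > 1 and Λ_α = (0, 1/(1−α)) if α < 1, and the differential-escort density equals 𝔈_α[ρ](u) = (1 + (α−1)u)^{α/(1−α)} = e_{(2α−1)/α}(−α u) for u ∈ Λ_α, where e_q(x) = (1 + (1−q)x)_+^{1/(1−q)}. Moreover ∫_{Λ_α} 𝔈_α[ρ](u) du = 1. Equivalently, for every q < 2, 𝔈_{1/(2−q)} applied to the exponential density yields the q-exponential density ℰ_q(u) = e_q(−u/(2−q)). -/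
open MeasureTheory Set

/-- The exponential probability density `ρ(x) = e^{-x}` on `(0, ∞)`, `0` otherwise. -/
noncomputable def expDen : ℝ → ℝ := fun x => if 0 < x then Real.exp (-x) else 0

/-- The q-exponential function `e_q(x) = (1 + (1-q)x)_+^{1/(1-q)}` (`e_1 = exp`). -/
noncomputable def qexp (q x : ℝ) : ℝ :=
  if q = 1 then Real.exp x else max (1 + (1 - q) * x) 0 ^ (1 / (1 - q))

/-! For `ρ(x) = e^{-x}` the integrand of `y_α` is `ρ^{1-α} = e^{(α-1)x}`, so `y_α` has the closed form
`(e^{(α-1)x} - 1)/(α-1)`: a strictly increasing map with inverse `log (1 + (α-1)u)/(α-1)`, whose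
image of `(0,∞)` is cut out by `1 + (α-1)u > 0`. Hence `𝔈_α[ρ](y_α x) = e^{-αx} = (1 + (α-1)y_α x)^{α/(1-α)}`,
which is the stated q-exponential after the reparametrisation `q = (2α-1)/α`. Normalisation holds for
every density: by the one-dimensional change of variables `u = y_α x`,
`∫ 𝔈_α[ρ] = ∫ |y_α'| ρ^α = ∫ ρ^{1-α} ρ^α = ∫ ρ`. -/

open Real

section Escort

variable {σ : ℝ → ℝ} {Λ : Set ℝ} {α : ℝ}

lemma yOf_one (σ : ℝ → ℝ) : yOf σ 1 = id := by
  funext x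
  simp [yOf]

lemma escortOf_one (σ : ℝ → ℝ) (Λ : Set ℝ) : escortOf σ Λ 1 = Λ.indicator σ := by
  have hinv : ∀ u ∈ Λ, Function.invFunOn id Λ u = u := fun u hu =>
    injOn_id Λ |>.leftInvOn_invFunOn hu
  funext u
  by_cases hu : u ∈ Λ <;> simp [escortOf, yOf_one, hu, hinv]

lemma escortOf_yOf (hinj : InjOn (yOf σ α) Λ) {x : ℝ} (hx : x ∈ Λ) :
    escortOf σ Λ α (yOf σ α x) = σ x ^ α := by
  rw [escortOf, indicator_of_mem (mem_image_of_mem _ hx), hinj.leftInvOn_invFunOn hx]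

theorem integral_escortOf (hΛ : MeasurableSet Λ) (hσ : ∀ x ∈ Λ, 0 < σ x)
    (hinj : InjOn (yOf σ α) Λ)
    (hy : ∀ x ∈ Λ, HasDerivWithinAt (yOf σ α) (σ x ^ (1 - α)) Λ x) :
    ∫ u in yOf σ α '' Λ, escortOf σ Λ α u = ∫ x in Λ, σ x := by
  rw [integral_image_eq_integral_abs_deriv_smul hΛ hy hinj]
  refine setIntegral_congr_fun hΛ fun x hx => ?_
  rw [escortOf_yOf hinj hx, smul_eq_mul, abs_of_pos (rpow_pos_of_pos (hσ x hx) _),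
    ← rpow_add (hσ x hx), sub_add_cancel, rpow_one]

end Escort

section ExpMulSubOneDiv

variable {c : ℝ}

lemma hasDerivAt_exp_mul_sub_one_div (hc : c ≠ 0) (x : ℝ) :
    HasDerivAt (fun x => (exp (c * x) - 1) / c) (exp (c * x)) x := by
  have h := (((hasDerivAt_id x).const_mul c).exp.sub_const 1).div_const c
  simpa [mul_div_cancel_left₀ _ hc, mul_comm] using h

lemma strictMono_exp_mul_sub_one_div (hc : c ≠ 0) :
    StrictMono fun x => (exp (c * x) - 1) / c :=
  strictMono_of_deriv_pos fun x => (hasDerivAt_exp_mul_sub_one_div hc x).deriv ▸ exp_pos _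

lemma exp_mul_sub_one_div_log {u : ℝ} (hc : c ≠ 0) (hu : 0 < 1 + c * u) :
    (exp (c * (log (1 + c * u) / c)) - 1) / c = u := by
  rw [mul_div_cancel₀ _ hc, exp_log hu]
  field_simp
  ring

lemma image_exp_mul_sub_one_div_Ioi (hc : c ≠ 0) :
    (fun x => (exp (c * x) - 1) / c) '' Ioi 0 = {u | 0 < u ∧ 0 < 1 + c * u} := by
  have hmono := strictMono_exp_mul_sub_one_div hc
  have hzero : (exp (c * 0) - 1) / c = 0 := by simp
  ext u
  constructor
  · rintro ⟨x, hx, rfl⟩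
    refine ⟨hzero ▸ hmono hx, ?_⟩
    rw [mul_div_cancel₀ _ hc, add_sub_cancel]
    exact exp_pos _
  · rintro ⟨hu, hcu⟩
    refine ⟨log (1 + c * u) / c, ?_, exp_mul_sub_one_div_log hc hcu⟩
    rw [mem_Ioi, ← hmono.lt_iff_lt, hzero, exp_mul_sub_one_div_log hc hcu]
    exact hu

lemma setOf_pos_and_one_add_mul_pos_of_nonneg (hc : 0 ≤ c) :
    {u : ℝ | 0 < u ∧ 0 < 1 + c * u} = Ioi 0 := by
  ext u
  simp only [mem_ofPred_eq, mem_Ioi, and_iff_left_iff_imp]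
  intro hu
  positivity

lemma setOf_pos_and_one_add_mul_pos_of_neg (hc : c < 0) :
    {u : ℝ | 0 < u ∧ 0 < 1 + c * u} = Ioo 0 (1 / -c) := by
  ext u
  simp only [mem_ofPred_eq, mem_Ioo, lt_div_iff₀ (neg_pos.mpr hc)]
  constructor <;> rintro ⟨hu, h⟩ <;> exact ⟨hu, by linarith⟩

end ExpMulSubOneDiv

section ExpDen

variable {α : ℝ}

lemma expDen_of_pos {x : ℝ} (hx : 0 < x) : expDen x = exp (-x) := if_pos hx

lemma expDen_rpow {x : ℝ} (hx : 0 < x) (p : ℝ) : expDen x ^ p = exp (-(p * x)) := by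
  rw [expDen_of_pos hx, ← exp_mul]
  ring_nf

lemma yOf_expDen (hα1 : α ≠ 1) {x : ℝ} (hx : 0 ≤ x) :
    yOf expDen α x = (exp ((α - 1) * x) - 1) / (α - 1) := by
  have hc : α - 1 ≠ 0 := sub_ne_zero.mpr hα1
  have hint : yOf expDen α x = ∫ t in (0 : ℝ)..x, exp ((α - 1) * t) := by
    rw [yOf, intervalIntegral.integral_of_le hx, intervalIntegral.integral_of_le hx]
    refine setIntegral_congr_fun measurableSet_Ioc fun t ht => ?_
    rw [expDen_rpow ht.1]
    ring_nf
  rw [hint, intervalIntegral.integral_eq_sub_of_hasDerivAt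
    (fun t _ => hasDerivAt_exp_mul_sub_one_div hc t) ((by fun_prop : Continuous _).intervalIntegrable _ _)]
  simp

lemma eqOn_yOf_expDen (hα1 : α ≠ 1) :
    EqOn (yOf expDen α) (fun x => (exp ((α - 1) * x) - 1) / (α - 1)) (Ioi 0) :=
  fun _ hx => yOf_expDen hα1 (le_of_lt hx)

lemma injOn_yOf_expDen (hα1 : α ≠ 1) : InjOn (yOf expDen α) (Ioi 0) :=
  (strictMono_exp_mul_sub_one_div (sub_ne_zero.mpr hα1)).injective.injOn.congr
    (eqOn_yOf_expDen hα1).symm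

lemma image_yOf_expDen (hα1 : α ≠ 1) :
    yOf expDen α '' Ioi 0 = {u | 0 < u ∧ 0 < 1 + (α - 1) * u} := by
  rw [(eqOn_yOf_expDen hα1).image_eq, image_exp_mul_sub_one_div_Ioi (sub_ne_zero.mpr hα1)]

lemma one_add_mul_yOf_expDen (hα1 : α ≠ 1) {x : ℝ} (hx : 0 ≤ x) :
    1 + (α - 1) * yOf expDen α x = exp ((α - 1) * x) := by
  rw [yOf_expDen hα1 hx, mul_div_cancel₀ _ (sub_ne_zero.mpr hα1), add_sub_cancel]

lemma invFunOn_yOf_expDen (hα1 : α ≠ 1) {u : ℝ} (hu : u ∈ yOf expDen α '' Ioi 0) :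
    Function.invFunOn (yOf expDen α) (Ioi 0) u = log (1 + (α - 1) * u) / (α - 1) := by
  obtain ⟨x, hx, rfl⟩ := hu
  rw [(injOn_yOf_expDen hα1).leftInvOn_invFunOn hx, one_add_mul_yOf_expDen hα1 (le_of_lt hx),
    log_exp, mul_div_cancel_left₀ _ (sub_ne_zero.mpr hα1)]

lemma escortOf_expDen (hα1 : α ≠ 1) {u : ℝ} (hu : u ∈ yOf expDen α '' Ioi 0) :
    escortOf expDen (Ioi 0) α u = (1 + (α - 1) * u) ^ (α / (1 - α)) := by
  obtain ⟨x, hx, rfl⟩ := hu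
  have h1α : 1 - α ≠ 0 := sub_ne_zero.mpr hα1.symm
  rw [escortOf_yOf (injOn_yOf_expDen hα1) hx, expDen_rpow hx,
    one_add_mul_yOf_expDen hα1 (le_of_lt hx), ← exp_mul]
  congr 1
  field_simp
  ring

lemma integral_escortOf_expDen (hα1 : α ≠ 1) :
    ∫ u in yOf expDen α '' Ioi 0, escortOf expDen (Ioi 0) α u = 1 := by
  have hderiv (x : ℝ) (hx : x ∈ Ioi (0 : ℝ)) :
      HasDerivWithinAt (yOf expDen α) (expDen x ^ (1 - α)) (Ioi 0) x := by
    rw [expDen_rpow hx, show -((1 - α) * x) = (α - 1) * x by ring]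
    exact (hasDerivAt_exp_mul_sub_one_div (sub_ne_zero.mpr hα1) x).hasDerivWithinAt.congr
      (eqOn_yOf_expDen hα1) (eqOn_yOf_expDen hα1 hx)
  rw [integral_escortOf measurableSet_Ioi (fun x hx => expDen_of_pos hx ▸ exp_pos _)
    (injOn_yOf_expDen hα1) hderiv, ← integral_exp_neg_Ioi_zero]
  exact setIntegral_congr_fun measurableSet_Ioi fun x hx => expDen_of_pos hx

end ExpDen

lemma qexp_of_ne_one {q x : ℝ} (hq : q ≠ 1) (hx : 0 ≤ 1 + (1 - q) * x) :
    qexp q x = (1 + (1 - q) * x) ^ (1 / (1 - q)) := by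
  rw [qexp, if_neg hq, max_eq_left hx]

lemma escortOf_expDen_eq_qexp {α : ℝ} (hα0 : α ≠ 0) (hα1 : α ≠ 1) {u : ℝ}
    (hu : u ∈ yOf expDen α '' Ioi 0) :
    escortOf expDen (Ioi 0) α u = qexp ((2 * α - 1) / α) (-(α * u)) := by
  have hq : (2 * α - 1) / α ≠ 1 := by
    rw [ne_eq, div_eq_one_iff_eq hα0]
    exact fun h => hα1 (by linarith)
  have h1q : 1 - (2 * α - 1) / α = (1 - α) / α := by field_simp; ring
  have hbase : 1 + (1 - α) / α * -(α * u) = 1 + (α - 1) * u := by field_simp; ring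
  have hpos : 0 < 1 + (α - 1) * u := (image_yOf_expDen hα1 ▸ hu).2
  rw [escortOf_expDen hα1 hu, qexp_of_ne_one hq (by rw [h1q, hbase]; exact hpos.le), h1q, hbase,
    one_div_div]

/-- **The differential-escort transform of the exponential density is a q-exponential
density**: for `α > 0`, `α ≠ 1`, the change of variable is
`y_α(x) = (e^{(α-1)x} − 1)/(α-1)`, with inverse `x_α(u) = log(1 + (α-1)u)/(α-1)`; the
transformed support is `(0,∞)` if `α > 1` and `(0, 1/(1-α))` if `α < 1`; the transformed
density is `𝔈_α[ρ](u) = (1 + (α-1)u)^{α/(1-α)} = e_{(2α-1)/α}(−αu)` and integrates to `1`.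
Equivalently, for every `q < 2`, `𝔈_{1/(2-q)}` maps the exponential density to the
q-exponential density `ℰ_q(u) = e_q(−u/(2-q))`. -/
theorem escort_exponential (α : ℝ) (hα : 0 < α) (hα1 : α ≠ 1) :
    (∀ x ∈ Set.Ioi (0:ℝ), yOf expDen α x = (Real.exp ((α - 1) * x) - 1) / (α - 1))
    ∧ (∀ u ∈ yOf expDen α '' Set.Ioi (0:ℝ),
        Function.invFunOn (yOf expDen α) (Set.Ioi 0) u
          = Real.log (1 + (α - 1) * u) / (α - 1))
    ∧ (1 < α → yOf expDen α '' Set.Ioi (0:ℝ) = Set.Ioi 0)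
    ∧ (α < 1 → yOf expDen α '' Set.Ioi (0:ℝ) = Set.Ioo 0 (1 / (1 - α)))
    ∧ (∀ u ∈ yOf expDen α '' Set.Ioi (0:ℝ),
        escortOf expDen (Set.Ioi 0) α u = (1 + (α - 1) * u) ^ (α / (1 - α))
        ∧ escortOf expDen (Set.Ioi 0) α u = qexp ((2 * α - 1) / α) (-(α * u)))
    ∧ (∫ u in yOf expDen α '' Set.Ioi (0:ℝ), escortOf expDen (Set.Ioi 0) α u) = 1
    ∧ (∀ q : ℝ, q < 2 → ∀ u ∈ yOf expDen (1 / (2 - q)) '' Set.Ioi (0:ℝ),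
        escortOf expDen (Set.Ioi 0) (1 / (2 - q)) u = qexp q (-(u / (2 - q)))) := by
  refine ⟨eqOn_yOf_expDen hα1, fun u hu => invFunOn_yOf_expDen hα1 hu, fun h => ?_,
    fun h => ?_, fun u hu => ⟨escortOf_expDen hα1 hu, escortOf_expDen_eq_qexp hα.ne' hα1 hu⟩,
    integral_escortOf_expDen hα1, fun q hq u hu => ?_⟩
  · rw [image_yOf_expDen hα1, setOf_pos_and_one_add_mul_pos_of_nonneg (by linarith)]
  · rw [image_yOf_expDen hα1, setOf_pos_and_one_add_mul_pos_of_neg (by linarith), neg_sub]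
  · have h2q : 2 - q ≠ 0 := by linarith
    by_cases hq1 : q = 1
    · subst hq1
      have hone : (1 : ℝ) / (2 - 1) = 1 := by norm_num
      rw [hone, yOf_one, image_id] at hu
      rw [hone, escortOf_one, indicator_of_mem hu, expDen_of_pos hu, qexp, if_pos rfl]
      norm_num
    · have hβ1 : 1 / (2 - q) ≠ 1 := by
        rw [ne_eq, div_eq_one_iff_eq h2q]
        exact fun h => hq1 (by linarith)
      rw [escortOf_expDen_eq_qexp (by positivity) hβ1 hu]
      congr 1
      · field_simp
        ring
      · ring
end

section
/- Closure of the q-exponential family under differential-escort transformations: for q < 2 let ℰ_q(u) = e_q(−u/(2−q)) be the q-exponential probability density (supported on (0,∞) for 1 ≤ q < 2 and on (0, (2−q)/(1−q)) for q < 1). Then for every α > 0, the differential-escort transform satisfies 𝔈_α[ℰ_q] = ℰ_{q̄} with q̄ = 2 + (q−2)/α; in particular 𝔈_{2−q}[ℰ_q] = ℰ_1 is the exponential density, and for any q, q̃ < 2 one has 𝔈_{(2−q)/(2−q̃)}[ℰ_q] = ℰ_{q̃}. -/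
open MeasureTheory Set

/-- The support of the q-exponential density `ℰ_q`: `(0, (2-q)/(1-q))` for `q < 1` and
`(0, ∞)` for `1 ≤ q < 2`. -/
noncomputable def qSupp (q : ℝ) : Set ℝ :=
  if q < 1 then Set.Ioo 0 ((2 - q) / (1 - q)) else Set.Ioi 0

/-- The q-exponential probability density `ℰ_q(u) = e_q(−u/(2-q))` on its support,
`0` outside. -/
noncomputable def qDen (q : ℝ) : ℝ → ℝ :=
  (qSupp q).indicator fun u => qexp q (-(u / (2 - q)))

/-! On its support, `ℰ_q(u) = e_q(-u/(2-q))` is a bijection onto `(0, 1)` whose inverse is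
`v ↦ -(2-q) ln_q v`, with `ln_q v = (v^{1-q} - 1)/(1-q)` the q-logarithm. Since `e_q' = e_q^q`,
differentiating `x ↦ ℰ_{q̄}⁻¹(ℰ_q(x)^α)` gives exactly `ℰ_q(x)^{1-α}` when `(2 - q̄) α = 2 - q`,
so this is the change of variable `y_α`. Hence `y_α` maps the support of `ℰ_q` bijectively onto
that of `ℰ_{q̄}`, and `ℰ_{q̄}(y_α(x)) = ℰ_q(x)^α` there, which is `𝔈_α[ℰ_q] = ℰ_{q̄}`. -/

open Topology

noncomputable def qlog (q v : ℝ) : ℝ :=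
  if q = 1 then Real.log v else (v ^ (1 - q) - 1) / (1 - q)

section QLog

variable {q : ℝ}

lemma qlog_one (q : ℝ) : qlog q 1 = 0 := by
  unfold qlog; split_ifs <;> simp

lemma one_add_mul_qlog (q v : ℝ) : 1 + (1 - q) * qlog q v = v ^ (1 - q) := by
  unfold qlog
  split_ifs with hq
  · simp [hq]
  · field_simp [sub_ne_zero.mpr (Ne.symm hq)]
    ring

lemma qexp_qlog (q : ℝ) {v : ℝ} (hv : 0 < v) : qexp q (qlog q v) = v := by
  rw [qexp]
  split_ifs with hq
  · rw [qlog, if_pos hq, Real.exp_log hv]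
  · rw [one_add_mul_qlog, max_eq_left (Real.rpow_pos_of_pos hv _).le, ← Real.rpow_mul hv.le,
      mul_one_div_cancel (sub_ne_zero.mpr (Ne.symm hq)), Real.rpow_one]

lemma qlog_qexp {x : ℝ} (hx : 0 < 1 + (1 - q) * x) : qlog q (qexp q x) = x := by
  rw [qexp, qlog]
  split_ifs with hq
  · exact Real.log_exp x
  · have h1q : 1 - q ≠ 0 := sub_ne_zero.mpr (Ne.symm hq)
    rw [max_eq_left hx.le, ← Real.rpow_mul hx.le, one_div_mul_cancel h1q, Real.rpow_one]
    field_simp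
    ring

lemma qexp_pos {x : ℝ} (hx : 0 < 1 + (1 - q) * x) : 0 < qexp q x := by
  rw [qexp]
  split_ifs
  · exact Real.exp_pos x
  · exact Real.rpow_pos_of_pos (lt_max_of_lt_left hx) _

lemma hasDerivAt_qlog (q : ℝ) {v : ℝ} (hv : 0 < v) : HasDerivAt (qlog q) (v ^ (-q)) v := by
  unfold qlog
  split_ifs with hq
  · rw [hq, Real.rpow_neg_one]
    exact Real.hasDerivAt_log hv.ne'
  · have h1q : 1 - q ≠ 0 := sub_ne_zero.mpr (Ne.symm hq)
    refine (((Real.hasDerivAt_rpow_const (p := 1 - q) (Or.inl hv.ne')).sub_const 1).div_const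
      (1 - q)).congr_deriv ?_
    rw [sub_sub_cancel_left]
    field_simp

lemma hasDerivAt_qexp {x : ℝ} (hx : 0 < 1 + (1 - q) * x) :
    HasDerivAt (qexp q) (qexp q x ^ q) x := by
  by_cases hq : q = 1
  · subst hq
    have hexp : qexp 1 = Real.exp := funext fun y => if_pos rfl
    rw [hexp, Real.rpow_one]
    exact Real.hasDerivAt_exp x
  have h1q : 1 - q ≠ 0 := sub_ne_zero.mpr (Ne.symm hq)
  have hbase : HasDerivAt (fun y => 1 + (1 - q) * y) (1 - q) x := by
    simpa using ((hasDerivAt_id x).const_mul (1 - q)).const_add 1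
  have hpow := hbase.rpow_const (p := 1 / (1 - q)) (Or.inl hx.ne')
  have heq : qexp q =ᶠ[𝓝 x] fun y => (1 + (1 - q) * y) ^ (1 / (1 - q)) := by
    filter_upwards [hbase.continuousAt.eventually (lt_mem_nhds hx)] with y hy
    rw [qexp, if_neg hq, max_eq_left hy.le]
  refine (hpow.congr_of_eventuallyEq heq).congr_deriv ?_
  rw [qexp, if_neg hq, max_eq_left hx.le, ← Real.rpow_mul hx.le]
  field_simp
  congr 1
  field_simp
  ring

lemma strictMonoOn_qlog (q : ℝ) : StrictMonoOn (qlog q) (Ioi 0) :=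
  strictMonoOn_of_deriv_pos (convex_Ioi 0)
    (fun v hv => (hasDerivAt_qlog q hv).continuousAt.continuousWithinAt)
    (fun v hv => by
      rw [interior_Ioi] at hv
      rw [(hasDerivAt_qlog q hv).deriv]
      exact Real.rpow_pos_of_pos hv _)

lemma qlog_neg_iff (q : ℝ) {v : ℝ} (hv : 0 < v) : qlog q v < 0 ↔ v < 1 := by
  rw [← qlog_one q]
  exact (strictMonoOn_qlog q).lt_iff_lt hv (mem_Ioi.mpr one_pos)

end QLog

section Density

variable {q : ℝ}

lemma mem_qSupp_iff (hq : q < 2) {u : ℝ} :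
    u ∈ qSupp q ↔ 0 < u ∧ 0 < 1 + (1 - q) * -(u / (2 - q)) := by
  have h2q : 0 < 2 - q := by linarith
  have hbase : 0 < 1 + (1 - q) * -(u / (2 - q)) ↔ (1 - q) * u < 2 - q := by
    rw [show 1 + (1 - q) * -(u / (2 - q)) = (2 - q - (1 - q) * u) / (2 - q) by field_simp; ring,
      div_pos_iff_of_pos_right h2q, sub_pos]
  rw [hbase, qSupp]
  split_ifs with h1
  · rw [mem_Ioo, lt_div_iff₀ (by linarith), mul_comm]
  · refine ⟨fun hu => ⟨hu, ?_⟩, And.left⟩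
    nlinarith [mem_Ioi.mp hu]

lemma Ioc_subset_qSupp {x : ℝ} (hx : x ∈ qSupp q) : Ioc 0 x ⊆ qSupp q := by
  unfold qSupp at *
  split_ifs at * with h
  · exact fun t ht => ⟨ht.1, ht.2.trans_lt hx.2⟩
  · exact fun t ht => ht.1

lemma hasDerivAt_qexp_neg_div {t : ℝ} (ht : 0 < 1 + (1 - q) * -(t / (2 - q))) :
    HasDerivAt (fun s => qexp q (-(s / (2 - q)))) (-(qexp q (-(t / (2 - q))) ^ q / (2 - q))) t := by
  have hlin : HasDerivAt (fun s : ℝ => -(s / (2 - q))) (-(1 / (2 - q))) t :=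
    ((hasDerivAt_id t).div_const (2 - q)).neg
  refine ((hasDerivAt_qexp ht).comp t hlin).congr_deriv ?_
  ring

noncomputable def qDenInv (q v : ℝ) : ℝ := -((2 - q) * qlog q v)

lemma neg_qDenInv_div (hq : q ≠ 2) (v : ℝ) : -(qDenInv q v / (2 - q)) = qlog q v := by
  rw [qDenInv, neg_div, neg_neg, mul_div_cancel_left₀ _ (sub_ne_zero.mpr (Ne.symm hq))]

lemma qDen_mem_Ioo (hq : q < 2) {u : ℝ} (hu : u ∈ qSupp q) : qDen q u ∈ Ioo 0 1 := by
  obtain ⟨hu0, hbase⟩ := (mem_qSupp_iff hq).1 hu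
  have hpos := qexp_pos hbase
  rw [qDen, indicator_of_mem hu]
  refine ⟨hpos, (qlog_neg_iff q hpos).1 ?_⟩
  rw [qlog_qexp hbase]
  exact neg_neg_of_pos (div_pos hu0 (by linarith))

lemma qDenInv_mem_qSupp (hq : q < 2) {v : ℝ} (hv : v ∈ Ioo 0 1) : qDenInv q v ∈ qSupp q := by
  rw [mem_qSupp_iff hq, neg_qDenInv_div hq.ne, one_add_mul_qlog]
  exact ⟨neg_pos.mpr (mul_neg_of_pos_of_neg (by linarith) ((qlog_neg_iff q hv.1).2 hv.2)),
    Real.rpow_pos_of_pos hv.1 _⟩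

lemma invOn_qDenInv_qDen (hq : q < 2) : InvOn (qDenInv q) (qDen q) (qSupp q) (Ioo 0 1) := by
  constructor
  · intro u hu
    rw [qDen, indicator_of_mem hu, qDenInv, qlog_qexp ((mem_qSupp_iff hq).1 hu).2]
    field_simp [(by linarith : (2 : ℝ) - q ≠ 0)]
  · intro v hv
    rw [qDen, indicator_of_mem (qDenInv_mem_qSupp hq hv), neg_qDenInv_div hq.ne, qexp_qlog q hv.1]

lemma bijOn_qDen (hq : q < 2) : BijOn (qDen q) (qSupp q) (Ioo 0 1) :=
  (invOn_qDenInv_qDen hq).bijOn (fun _ => qDen_mem_Ioo hq) (fun _ => qDenInv_mem_qSupp hq)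

lemma bijOn_qDenInv (hq : q < 2) : BijOn (qDenInv q) (Ioo 0 1) (qSupp q) :=
  (invOn_qDenInv_qDen hq).symm.bijOn (fun _ => qDenInv_mem_qSupp hq) (fun _ => qDen_mem_Ioo hq)

end Density

lemma bijOn_rpow_Ioo {α : ℝ} (hα : 0 < α) : BijOn (fun v : ℝ => v ^ α) (Ioo 0 1) (Ioo 0 1) :=
  InvOn.bijOn (f' := fun v => v ^ α⁻¹)
    ⟨fun _ hv => Real.rpow_rpow_inv hv.1.le hα.ne', fun _ hv => Real.rpow_inv_rpow hv.1.le hα.ne'⟩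
    (fun _ hv => ⟨Real.rpow_pos_of_pos hv.1 α, Real.rpow_lt_one hv.1.le hv.2 hα⟩)
    (fun _ hv => ⟨Real.rpow_pos_of_pos hv.1 _, Real.rpow_lt_one hv.1.le hv.2 (inv_pos.mpr hα)⟩)

section Escort

variable {q q' α : ℝ}

lemma hasDerivAt_qDenInv_rpow_qexp (hq : q ≠ 2) (h : (2 - q') * α = 2 - q) {t : ℝ}
    (ht : 0 < 1 + (1 - q) * -(t / (2 - q))) :
    HasDerivAt (fun s => qDenInv q' (qexp q (-(s / (2 - q))) ^ α))
      (qexp q (-(t / (2 - q))) ^ (1 - α)) t := by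
  set e := qexp q (-(t / (2 - q)))
  have he : 0 < e := qexp_pos ht
  have hpow := (hasDerivAt_qexp_neg_div ht).rpow_const (p := α) (Or.inl he.ne')
  have hlog := ((hasDerivAt_qlog q' (Real.rpow_pos_of_pos he α)).comp t hpow).const_mul (2 - q')
  refine hlog.neg.congr_deriv ?_
  have hexp : α * -q' + q + (α - 1) = 1 - α := by linear_combination h
  rw [← Real.rpow_mul he.le]
  calc -((2 - q') * (e ^ (α * -q') * (-(e ^ q / (2 - q)) * α * e ^ (α - 1))))
      = (2 - q') * α / (2 - q) * (e ^ (α * -q') * e ^ q * e ^ (α - 1)) := by ring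
    _ = e ^ (1 - α) := by
      rw [h, div_self (sub_ne_zero.mpr (Ne.symm hq)), one_mul, ← Real.rpow_add he,
        ← Real.rpow_add he, hexp]

lemma yOf_qDen (hq : q < 2) (h : (2 - q') * α = 2 - q) {x : ℝ} (hx : x ∈ qSupp q) :
    yOf (qDen q) α x = qDenInv q' (qDen q x ^ α) := by
  have hx0 : 0 ≤ x := ((mem_qSupp_iff hq).1 hx).1.le
  have hbase : ∀ t ∈ Icc 0 x, 0 < 1 + (1 - q) * -(t / (2 - q)) := by
    intro t ht
    rcases ht.1.eq_or_lt with rfl | ht0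
    · simp
    · exact ((mem_qSupp_iff hq).1 (Ioc_subset_qSupp hx ⟨ht0, ht.2⟩)).2
  have hcont : ContinuousOn (fun t => qexp q (-(t / (2 - q))) ^ (1 - α)) (Icc 0 x) :=
    fun t ht => ((hasDerivAt_qexp_neg_div (hbase t ht)).continuousAt.rpow_const
      (Or.inl (qexp_pos (hbase t ht)).ne')).continuousWithinAt
  calc yOf (qDen q) α x = ∫ t in (0 : ℝ)..x, qexp q (-(t / (2 - q))) ^ (1 - α) := by
        refine intervalIntegral.integral_congr_ae (ae_of_all _ fun t ht => ?_)
        rw [uIoc_of_le hx0] at ht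
        rw [qDen, indicator_of_mem (Ioc_subset_qSupp hx ht)]
    _ = qDenInv q' (qexp q (-(x / (2 - q))) ^ α) - qDenInv q' (qexp q (-(0 / (2 - q))) ^ α) := by
        refine intervalIntegral.integral_eq_sub_of_hasDerivAt
          (f := fun s => qDenInv q' (qexp q (-(s / (2 - q))) ^ α)) (fun t ht => ?_)
          (hcont.intervalIntegrable_of_Icc hx0)
        rw [uIcc_of_le hx0] at ht
        exact hasDerivAt_qDenInv_rpow_qexp hq.ne h (hbase t ht)
    _ = qDenInv q' (qDen q x ^ α) := by
        simp [qDen, indicator_of_mem hx, qexp, qDenInv, qlog_one]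

end Escort

lemma escortOf_eq_indicator {σ τ : ℝ → ℝ} {Λ Λ' : Set ℝ} {α : ℝ} (himg : yOf σ α '' Λ = Λ')
    (hτ : ∀ x ∈ Λ, τ (yOf σ α x) = σ x ^ α) : escortOf σ Λ α = Λ'.indicator τ := by
  rw [escortOf, himg]
  refine indicator_congr fun u hu => ?_
  have hex : ∃ x ∈ Λ, yOf σ α x = u := by rwa [← himg] at hu
  rw [← hτ _ (Function.invFunOn_mem hex), Function.invFunOn_eq hex]

theorem escortOf_qDen {q q' α : ℝ} (hq : q < 2) (hα : 0 < α) (h : (2 - q') * α = 2 - q) :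
    escortOf (qDen q) (qSupp q) α = qDen q' := by
  have hq' : q' < 2 := by nlinarith
  have hbij : BijOn (yOf (qDen q) α) (qSupp q) (qSupp q') :=
    ((bijOn_qDenInv hq').comp ((bijOn_rpow_Ioo hα).comp (bijOn_qDen hq))).congr
      fun x hx => (yOf_qDen hq h hx).symm
  refine escortOf_eq_indicator hbij.image_eq fun x hx => ?_
  rw [← indicator_of_mem (hbij.mapsTo hx) (fun u => qexp q' (-(u / (2 - q')))), yOf_qDen hq h hx]
  exact (invOn_qDenInv_qDen hq').2 (bijOn_rpow_Ioo hα |>.mapsTo (qDen_mem_Ioo hq hx))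

/-- **Closure of the q-exponential family under differential-escort transformations**:
for `q < 2` and `α > 0`, `𝔈_α[ℰ_q] = ℰ_{q̄}` with `q̄ = 2 + (q-2)/α`; in particular
`𝔈_{2-q}[ℰ_q] = ℰ_1` is the exponential density, and for any `q, q̃ < 2` one has
`𝔈_{(2-q)/(2-q̃)}[ℰ_q] = ℰ_{q̃}`. -/
theorem escort_qexponential_closure (q : ℝ) (hq : q < 2) (α : ℝ) (hα : 0 < α) :
    (∀ u : ℝ, escortOf (qDen q) (qSupp q) α u = qDen (2 + (q - 2) / α) u)
    ∧ (∀ u : ℝ, escortOf (qDen q) (qSupp q) (2 - q) u = qDen 1 u)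
    ∧ (∀ q' : ℝ, q' < 2 →
        ∀ u : ℝ, escortOf (qDen q) (qSupp q) ((2 - q) / (2 - q')) u = qDen q' u) := by
  refine ⟨congrFun (escortOf_qDen hq hα ?_), congrFun (escortOf_qDen hq (by linarith) (by ring)),
    fun q' hq' => congrFun (escortOf_qDen hq (div_pos (by linarith) (by linarith)) ?_)⟩
  · field_simp
    ring
  · exact mul_div_cancel₀ _ (by linarith)
end

section
/- Power-law decay of the differential-escort transform of an exact power-law tail (Lemma 1, supercritical case): let ρ : [0,∞) → ℝ be a continuous, strictly positive probability density with ρ(x) = c·x^{−β} for all x ≥ a, where a > 0, c > 0, β > 1, and let α > (β−1)/β. Set γ = 1 − β(1−α) > 0. Then for all x ≥ a the change of variable satisfies y_α(x) = y_α(a) + c^{1−α}(x^γ − a^γ)/γ, the transformed support is [0,∞), and for u ≥ y_α(a) the differential-escort density is exactly ρ_α(u) = c^α · [ (γ/c^{1−α})(u − u₀) ]^{−βα/γ}, where u₀ = y_α(a) − c^{1−α} a^γ/γ; consequently u^{βα/γ} · ρ_α(u) → c^α (γ/c^{1−α})^{−βα/γ} as u → ∞, i.e. ρ_α(u) decays as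 O(u^{−βα/(1−β(1−α))}). -/
open MeasureTheory Set

/-!
On the tail `ρ^{1-α}` is the power `c^{1-α} x^{γ-1}`, so `y_α` is an explicit affine function
of `x^γ` there. As `γ > 0` it is unbounded, which forces `∫₀^∞ ρ^{1-α} = ∞`, and it can be
inverted in closed form:
`x_α(u) = ((γ/c^{1-α})(u - u₀))^{1/γ}`. Substituting into `ρ(x)^α = c^α x^{-βα}` gives the exact
escort density, whose power-law asymptotics is then elementary.
-/

open Filter Topology

section ChangeOfVariable

variable {σ : ℝ → ℝ} {α : ℝ}

theorem intervalIntegrable_rpow_of_continuousOn_Ici (hcont : ContinuousOn σ (Ici 0))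
    (hpos : ∀ x, 0 ≤ x → 0 < σ x) (p : ℝ) {x₁ x₂ : ℝ} (h₁ : 0 ≤ x₁) (h₂ : 0 ≤ x₂) :
    IntervalIntegrable (fun t => σ t ^ p) volume x₁ x₂ :=
  ((hcont.rpow_const fun x hx => Or.inl (hpos x hx).ne').mono fun _ ht =>
    le_trans (le_min h₁ h₂) ht.1).intervalIntegrable

theorem yOf_eq_add_integral (hcont : ContinuousOn σ (Ici 0)) (hpos : ∀ x, 0 ≤ x → 0 < σ x)
    {x₁ x₂ : ℝ} (h₁ : 0 ≤ x₁) (h₂ : 0 ≤ x₂) :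
    yOf σ α x₂ = yOf σ α x₁ + ∫ t in x₁..x₂, σ t ^ (1 - α) :=
  (intervalIntegral.integral_add_adjacent_intervals
    (intervalIntegrable_rpow_of_continuousOn_Ici hcont hpos _ le_rfl h₁)
    (intervalIntegrable_rpow_of_continuousOn_Ici hcont hpos _ h₁ h₂)).symm

theorem strictMonoOn_yOf (hcont : ContinuousOn σ (Ici 0)) (hpos : ∀ x, 0 ≤ x → 0 < σ x) :
    StrictMonoOn (yOf σ α) (Ici 0) := by
  intro x₁ h₁ x₂ h₂ h₁₂
  rw [yOf_eq_add_integral hcont hpos h₁ h₂, lt_add_iff_pos_right]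
  exact intervalIntegral.intervalIntegral_pos_of_pos_on
    (intervalIntegrable_rpow_of_continuousOn_Ici hcont hpos _ h₁ h₂)
    (fun t ht => Real.rpow_pos_of_pos (hpos t (le_trans h₁ ht.1.le)) _) h₁₂

theorem ofReal_yOf_le_lintegral (hcont : ContinuousOn σ (Ici 0))
    (hpos : ∀ x, 0 ≤ x → 0 < σ x) {x : ℝ} (hx : 0 ≤ x) :
    ENNReal.ofReal (yOf σ α x) ≤ ∫⁻ t in Ioi 0, ENNReal.ofReal (σ t ^ (1 - α)) := by
  have hint : IntegrableOn (fun t => σ t ^ (1 - α)) (Ioc 0 x) :=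
    (intervalIntegrable_iff_integrableOn_Ioc_of_le hx).mp
      (intervalIntegrable_rpow_of_continuousOn_Ici hcont hpos _ le_rfl hx)
  have hnonneg : 0 ≤ᵐ[volume.restrict (Ioc 0 x)] fun t => σ t ^ (1 - α) :=
    (ae_restrict_iff' measurableSet_Ioc).mpr <| .of_forall fun t ht =>
      Real.rpow_nonneg (hpos t ht.1.le).le _
  rw [yOf, intervalIntegral.integral_of_le hx, ofReal_integral_eq_lintegral_ofReal hint hnonneg]
  exact lintegral_mono_set Ioc_subset_Ioi_self

theorem lintegral_eq_top_of_tendsto_yOf (hcont : ContinuousOn σ (Ici 0))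
    (hpos : ∀ x, 0 ≤ x → 0 < σ x) (htop : Tendsto (yOf σ α) atTop atTop) :
    ∫⁻ t in Ioi 0, ENNReal.ofReal (σ t ^ (1 - α)) = ⊤ :=
  top_le_iff.mp <| le_of_tendsto (ENNReal.tendsto_ofReal_atTop.comp htop) <|
    (eventually_ge_atTop 0).mono fun _ hx => ofReal_yOf_le_lintegral hcont hpos hx

theorem escortOf_eq_of_yOf_eq {Λ : Set ℝ} (hinj : InjOn (yOf σ α) Λ) {x u : ℝ} (hx : x ∈ Λ)
    (hxu : yOf σ α x = u) : escortOf σ Λ α u = σ x ^ α := by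
  subst hxu
  rw [escortOf, indicator_of_mem (mem_image_of_mem _ hx), hinj.leftInvOn_invFunOn hx]

end ChangeOfVariable

theorem tendsto_rpow_mul_rpow_neg_affine {L : ℝ} (hL : 0 < L) (p u₀ : ℝ) :
    Tendsto (fun u : ℝ => u ^ p * (L * (u - u₀)) ^ (-p)) atTop (𝓝 (L ^ (-p))) := by
  have hratio : Tendsto (fun u : ℝ => L * (u - u₀) / u) atTop (𝓝 L) := by
    have h := (tendsto_const_nhds (x := L)).sub
      ((tendsto_const_nhds (x := L * u₀)).div_atTop tendsto_id)
    rw [sub_zero] at h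
    refine h.congr' ((eventually_gt_atTop 0).mono fun u hu => ?_)
    dsimp only [id]
    field_simp
  refine ((Real.continuousAt_rpow_const L (-p) (Or.inl hL.ne')).tendsto.comp hratio).congr' ?_
  filter_upwards [eventually_gt_atTop 0, eventually_gt_atTop u₀] with u hu hu₀
  have hs : 0 ≤ L * (u - u₀) := mul_nonneg hL.le (sub_nonneg.mpr hu₀.le)
  simp only [Function.comp_apply]
  rw [Real.div_rpow hs hu.le, Real.rpow_neg hu.le, div_inv_eq_mul, mul_comm]

section PowerLawTail

variable {ρ : ℝ → ℝ} {a c β α γ : ℝ}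

theorem rpow_one_sub_of_powerlaw_tail (ha : 0 < a) (hc : 0 < c)
    (htail : ∀ x, a ≤ x → ρ x = c * x ^ (-β)) (hγ : γ = 1 - β * (1 - α)) {t : ℝ}
    (ht : a ≤ t) : ρ t ^ (1 - α) = c ^ (1 - α) * t ^ (γ - 1) := by
  have ht₀ : 0 < t := ha.trans_le ht
  rw [htail t ht, Real.mul_rpow hc.le (Real.rpow_nonneg ht₀.le _), ← Real.rpow_mul ht₀.le, hγ]
  ring_nf

theorem yOf_eq_of_powerlaw_tail (hcont : ContinuousOn ρ (Ici 0)) (hpos : ∀ x, 0 ≤ x → 0 < ρ x)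
    (ha : 0 < a) (hc : 0 < c) (htail : ∀ x, a ≤ x → ρ x = c * x ^ (-β))
    (hγ : γ = 1 - β * (1 - α)) (hγ₀ : γ ≠ 0) {x : ℝ} (hx : a ≤ x) :
    yOf ρ α x = yOf ρ α a + c ^ (1 - α) * (x ^ γ - a ^ γ) / γ := by
  have hnot : (0 : ℝ) ∉ uIcc a x := fun h => (uIcc_of_le hx ▸ h).1.not_gt ha
  rw [yOf_eq_add_integral hcont hpos ha.le (ha.le.trans hx),
    intervalIntegral.integral_congr fun t ht =>
      rpow_one_sub_of_powerlaw_tail ha hc htail hγ (uIcc_of_le hx ▸ ht).1,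
    intervalIntegral.integral_const_mul,
    integral_rpow (Or.inr ⟨fun h => hγ₀ (by linarith), hnot⟩), sub_add_cancel, mul_div_assoc]

theorem tendsto_yOf_atTop_of_powerlaw_tail (hcont : ContinuousOn ρ (Ici 0))
    (hpos : ∀ x, 0 ≤ x → 0 < ρ x) (ha : 0 < a) (hc : 0 < c)
    (htail : ∀ x, a ≤ x → ρ x = c * x ^ (-β)) (hγ : γ = 1 - β * (1 - α)) (hγ₀ : 0 < γ) :
    Tendsto (yOf ρ α) atTop atTop := by
  have h : Tendsto (fun x : ℝ => yOf ρ α a + c ^ (1 - α) * (x ^ γ - a ^ γ) / γ) atTop atTop :=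
    tendsto_atTop_add_const_left _ _ <| Tendsto.atTop_div_const hγ₀ <|
      Tendsto.const_mul_atTop (Real.rpow_pos_of_pos hc _) <|
        tendsto_atTop_add_const_right _ _ (tendsto_rpow_atTop hγ₀)
  exact h.congr' <| (eventually_ge_atTop a).mono fun x hx =>
    (yOf_eq_of_powerlaw_tail hcont hpos ha hc htail hγ hγ₀.ne' hx).symm

theorem escortOf_eq_of_powerlaw_tail (hcont : ContinuousOn ρ (Ici 0))
    (hpos : ∀ x, 0 ≤ x → 0 < ρ x) (ha : 0 < a) (hc : 0 < c)
    (htail : ∀ x, a ≤ x → ρ x = c * x ^ (-β)) (hγ : γ = 1 - β * (1 - α)) (hγ₀ : 0 < γ)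
    {u : ℝ} (hu : yOf ρ α a ≤ u) :
    escortOf ρ (Ioi 0) α u = c ^ α * ((γ / c ^ (1 - α))
      * (u - (yOf ρ α a - c ^ (1 - α) * a ^ γ / γ))) ^ (-(β * α / γ)) := by
  have hK : 0 < c ^ (1 - α) := Real.rpow_pos_of_pos hc _
  set s := (γ / c ^ (1 - α)) * (u - (yOf ρ α a - c ^ (1 - α) * a ^ γ / γ)) with hs_def
  have hs : s = γ / c ^ (1 - α) * (u - yOf ρ α a) + a ^ γ := by
    rw [hs_def]; field_simp; ring
  have has : a ^ γ ≤ s := by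
    rw [hs]; exact le_add_of_nonneg_left (by have := sub_nonneg.mpr hu; positivity)
  have hs₀ : 0 < s := (Real.rpow_pos_of_pos ha _).trans_le has
  -- the explicit inverse `x_α(u) = s^{1/γ}` of `y_α` on the tail
  set x := s ^ γ⁻¹
  have hxγ : x ^ γ = s := Real.rpow_inv_rpow hs₀.le hγ₀.ne'
  have hax : a ≤ x := by
    rw [← Real.rpow_rpow_inv ha.le hγ₀.ne']
    exact Real.rpow_le_rpow (Real.rpow_nonneg ha.le _) has (inv_nonneg.mpr hγ₀.le)
  have hx₀ : 0 < x := ha.trans_le hax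
  have hyx : yOf ρ α x = u := by
    rw [yOf_eq_of_powerlaw_tail hcont hpos ha hc htail hγ hγ₀.ne' hax, hxγ, hs]
    field_simp
    ring
  rw [escortOf_eq_of_yOf_eq ((strictMonoOn_yOf hcont hpos).injOn.mono Ioi_subset_Ici_self)
    hx₀ hyx, htail x hax, Real.mul_rpow hc.le (Real.rpow_nonneg hx₀.le _), ← hxγ,
    ← Real.rpow_mul hx₀.le, ← Real.rpow_mul hx₀.le]
  congr 2
  field_simp

end PowerLawTail

theorem powerlaw_escort_supercritical_general (ρ : ℝ → ℝ)
    (hcont : ContinuousOn ρ (Set.Ici 0)) (hpos : ∀ x : ℝ, 0 ≤ x → 0 < ρ x)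
    (a c β : ℝ) (ha : 0 < a) (hc : 0 < c) (hβ : 1 < β)
    (htail : ∀ x : ℝ, a ≤ x → ρ x = c * x ^ (-β))
    (α : ℝ) (hα : (β - 1) / β < α) (γ : ℝ) (hγ : γ = 1 - β * (1 - α)) :
    0 < γ
    ∧ (∀ x : ℝ, a ≤ x →
        yOf ρ α x = yOf ρ α a + c ^ (1 - α) * (x ^ γ - a ^ γ) / γ)
    ∧ (∫⁻ x in Set.Ioi (0:ℝ), ENNReal.ofReal (ρ x ^ (1 - α))) = ⊤
    ∧ (∀ u : ℝ, yOf ρ α a ≤ u →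
        escortOf ρ (Set.Ioi 0) α u
          = c ^ α * ((γ / c ^ (1 - α))
              * (u - (yOf ρ α a - c ^ (1 - α) * a ^ γ / γ))) ^ (-(β * α / γ)))
    ∧ Filter.Tendsto (fun u : ℝ => u ^ (β * α / γ) * escortOf ρ (Set.Ioi 0) α u)
        Filter.atTop (nhds (c ^ α * (γ / c ^ (1 - α)) ^ (-(β * α / γ)))) := by
  have hγ₀ : 0 < γ := by
    rw [div_lt_iff₀ (by linarith)] at hα
    linarith
  have hescort := fun u (hu : yOf ρ α a ≤ u) =>
    escortOf_eq_of_powerlaw_tail hcont hpos ha hc htail hγ hγ₀ hu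
  refine ⟨hγ₀, fun x hx => yOf_eq_of_powerlaw_tail hcont hpos ha hc htail hγ hγ₀.ne' hx,
    lintegral_eq_top_of_tendsto_yOf hcont hpos
      (tendsto_yOf_atTop_of_powerlaw_tail hcont hpos ha hc htail hγ hγ₀), hescort, ?_⟩
  refine ((tendsto_rpow_mul_rpow_neg_affine (div_pos hγ₀ (Real.rpow_pos_of_pos hc (1 - α)))
    (β * α / γ) (yOf ρ α a - c ^ (1 - α) * a ^ γ / γ)).const_mul (c ^ α)).congr' ?_
  filter_upwards [eventually_ge_atTop (yOf ρ α a)] with u hu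
  rw [hescort u hu]
  ring

/-- **Power-law decay of the differential-escort transform of an exact power-law tail**
(Lemma 1, supercritical case): let `ρ` be a continuous, strictly positive probability
density on `[0,∞)` with `ρ(x) = c·x^{-β}` for `x ≥ a` (`a, c > 0`, `β > 1`), let
`α > (β-1)/β` and `γ = 1 − β(1-α) > 0`.  Then `y_α(x) = y_α(a) + c^{1-α}(x^γ − a^γ)/γ`
for `x ≥ a`, the transformed support is all of `[0,∞)` (`∫₀^∞ ρ^{1-α} = ∞`), and for
`u ≥ y_α(a)` one has `ρ_α(u) = c^α · ((γ/c^{1-α})(u − u₀))^{-βα/γ}` with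
`u₀ = y_α(a) − c^{1-α} a^γ/γ`; consequently
`u^{βα/γ} ρ_α(u) → c^α (γ/c^{1-α})^{-βα/γ}` as `u → ∞`, i.e. `ρ_α` decays as
`O(u^{-βα/(1-β(1-α))})`. -/
theorem powerlaw_escort_supercritical (ρ : ℝ → ℝ)
    (hcont : ContinuousOn ρ (Set.Ici 0)) (hpos : ∀ x : ℝ, 0 ≤ x → 0 < ρ x)
    (htot : (∫ x in Set.Ioi (0:ℝ), ρ x) = 1)
    (a c β : ℝ) (ha : 0 < a) (hc : 0 < c) (hβ : 1 < β)
    (htail : ∀ x : ℝ, a ≤ x → ρ x = c * x ^ (-β))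
    (α : ℝ) (hα : (β - 1) / β < α) (γ : ℝ) (hγ : γ = 1 - β * (1 - α)) :
    0 < γ
    ∧ (∀ x : ℝ, a ≤ x →
        yOf ρ α x = yOf ρ α a + c ^ (1 - α) * (x ^ γ - a ^ γ) / γ)
    ∧ (∫⁻ x in Set.Ioi (0:ℝ), ENNReal.ofReal (ρ x ^ (1 - α))) = ⊤
    ∧ (∀ u : ℝ, yOf ρ α a ≤ u →
        escortOf ρ (Set.Ioi 0) α u
          = c ^ α * ((γ / c ^ (1 - α))
              * (u - (yOf ρ α a - c ^ (1 - α) * a ^ γ / γ))) ^ (-(β * α / γ)))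
    ∧ Filter.Tendsto (fun u : ℝ => u ^ (β * α / γ) * escortOf ρ (Set.Ioi 0) α u)
        Filter.atTop (nhds (c ^ α * (γ / c ^ (1 - α)) ^ (-(β * α / γ)))) :=
  powerlaw_escort_supercritical_general ρ hcont hpos a c β ha hc hβ htail α hα γ hγ
end
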